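/- Let R be an unramified dyadic local ring. If an R-lattice J primitively represents 2^{a+1}ε for a nonnegative integer a and a unit ε ∈ R^×, then ℍ ⊥ J primitively represents both 2^a ℍ and 2^a 𝔸. -/

import Mathlib

/-
Let `v ∈ J` be primitive of norm `2^(a+1) ε`.  Inside `ℍ ⊥ ⟨v⟩` one writes down explicit bases of
primitive planes with Gram matrices `2^a ℍ` and `2^a 𝔸`.  The first is pure algebra; the second
needs `γ, t` with `t` a unit and `γ - γ² + t²ε = ρ`.  Since the residue field is finite of
characteristic 2, every residue is a square, so `t²ε ≡ ρ`; then `γ² - γ = t²ε - ρ` has a simple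
root modulo the maximal ideal and lifts by Hensel's lemma.
-/

open Matrix

/-- Primitive representation: `T` with `Tᵀ H T = G` whose image is a direct summand
(equivalently `T` has a left inverse). -/
def PrimRep {R : Type*} [CommRing R] {ι κ : Type*} [Fintype ι] [Fintype κ] [DecidableEq κ]
    (G : Matrix κ κ R) (H : Matrix ι ι R) : Prop :=
  ∃ T : Matrix ι κ R, Tᵀ * H * T = G ∧ ∃ P : Matrix κ ι R, P * T = 1

open IsLocalRing

section

variable {R : Type*} [CommRing R]

namespace PrimRep

theorem refl {ι : Type*} [Fintype ι] [DecidableEq ι] (H : Matrix ι ι R) : PrimRep H H :=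
  ⟨1, by simp, 1, Matrix.one_mul 1⟩

theorem trans {ι κ ν : Type*} [Fintype ι] [Fintype κ] [Fintype ν] [DecidableEq ι] [DecidableEq κ]
    {G : Matrix κ κ R} {H : Matrix ι ι R} {K : Matrix ν ν R}
    (hGH : PrimRep G H) (hHK : PrimRep H K) : PrimRep G K := by
  obtain ⟨T₁, hT₁, P₁, hP₁⟩ := hGH
  obtain ⟨T₂, hT₂, P₂, hP₂⟩ := hHK
  refine ⟨T₂ * T₁, ?_, P₁ * P₂, ?_⟩
  · rw [← hT₁, ← hT₂, transpose_mul]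
    simp only [Matrix.mul_assoc]
  · rw [Matrix.mul_assoc, ← Matrix.mul_assoc P₂, hP₂, Matrix.one_mul, hP₁]

theorem fromBlocks {ι₁ ι₂ κ₁ κ₂ : Type*} [Fintype ι₁] [Fintype ι₂] [Fintype κ₁] [Fintype κ₂]
    [DecidableEq κ₁] [DecidableEq κ₂]
    {G₁ : Matrix κ₁ κ₁ R} {G₂ : Matrix κ₂ κ₂ R} {H₁ : Matrix ι₁ ι₁ R} {H₂ : Matrix ι₂ ι₂ R}
    (h₁ : PrimRep G₁ H₁) (h₂ : PrimRep G₂ H₂) :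
    PrimRep (Matrix.fromBlocks G₁ 0 0 G₂) (Matrix.fromBlocks H₁ 0 0 H₂) := by
  obtain ⟨T₁, hT₁, P₁, hP₁⟩ := h₁
  obtain ⟨T₂, hT₂, P₂, hP₂⟩ := h₂
  refine ⟨Matrix.fromBlocks T₁ 0 0 T₂, ?_, Matrix.fromBlocks P₁ 0 0 P₂, ?_⟩
  · simp [fromBlocks_transpose, fromBlocks_multiply, hT₁, hT₂]
  · simp [fromBlocks_multiply, hP₁, hP₂, fromBlocks_one]

theorem fromBlocks_of_fromRows {ι₁ ι₂ κ : Type*} [Fintype ι₁] [Fintype ι₂] [Fintype κ]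
    [DecidableEq κ] {G : Matrix κ κ R} {H₁ : Matrix ι₁ ι₁ R} {H₂ : Matrix ι₂ ι₂ R}
    (A : Matrix ι₁ κ R) (c : Matrix ι₂ κ R) (P₁ : Matrix κ ι₁ R) (P₂ : Matrix κ ι₂ R)
    (hG : Aᵀ * H₁ * A + cᵀ * H₂ * c = G) (hP : P₁ * A + P₂ * c = 1) :
    PrimRep G (Matrix.fromBlocks H₁ 0 0 H₂) := by
  refine ⟨fromRows A c, ?_, fromCols P₁ P₂, by rw [fromCols_mul_fromRows, hP]⟩
  rw [transpose_fromRows, Matrix.mul_assoc, fromBlocks_mul_fromRows, fromCols_mul_fromRows, ← hG]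
  simp [Matrix.mul_assoc]

end PrimRep

/-- With `e, f` the hyperbolic basis and `v` of norm `2bu`, the vectors `e - bu f + v` and
`-u⁻¹ e` span a primitive copy of `b ℍ`. -/
theorem primRep_smul_hyperbolic_fromBlocks_hyperbolic (b : R) (u : Rˣ) :
    PrimRep (b • !![0, 1; 1, 0]) (fromBlocks !![0, 1; 1, 0] 0 0 !![2 * b * u]) := by
  refine PrimRep.fromBlocks_of_fromRows !![1, -↑u⁻¹; -(b * u), 0] !![1, 0]
    !![0, 0; -(u : R), 0] !![1; (u : R)] ?_ ?_
  · ext i j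
    fin_cases i <;> fin_cases j <;> simp [Matrix.mul_apply, Fin.sum_univ_succ, mul_left_comm _ b]
    ring
  · ext i j
    fin_cases i <;> fin_cases j <;> simp

/-- The vectors `e + b f` and `γ e + b(1 - γ) f + t v` have norms `2b` and
`2b(γ - γ² + t²u) = 2bρ`, and inner product `b`. -/
theorem primRep_smul_anisotropic_fromBlocks_hyperbolic {b u γ ρ : R} (t : Rˣ)
    (hρ : γ - γ ^ 2 + t ^ 2 * u = ρ) :
    PrimRep (b • !![2, 1; 1, 2 * ρ]) (fromBlocks !![0, 1; 1, 0] 0 0 !![2 * b * u]) := by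
  subst hρ
  refine PrimRep.fromBlocks_of_fromRows !![1, γ; b, b * (1 - γ)] !![0, (t : R)]
    !![1, 0; 0, 0] !![-(γ * ↑t⁻¹); ↑t⁻¹] ?_ ?_ <;>
  · ext i j
    fin_cases i <;> fin_cases j <;> simp [Matrix.mul_apply, Fin.sum_univ_succ] <;> ring

section IsLocalRing

variable [IsLocalRing R]

theorem exists_sq_sub_self_eq_of_mem_maximalIdeal [HenselianRing R (maximalIdeal R)] {c : R}
    (hc : c ∈ maximalIdeal R) : ∃ γ : R, γ ^ 2 - γ = c := by
  open Polynomial in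
  have hmonic : (X ^ 2 - X - C c : R[X]).Monic := by monicity!
  -- `0` is a simple root mod `maximalIdeal R`: the derivative there is `-1`.
  obtain ⟨γ, hγ, -⟩ := HenselianRing.is_henselian (I := maximalIdeal R) (X ^ 2 - X - C c)
    hmonic 0 (by simpa using hc) (by simp)
  exact ⟨γ, by simpa [sub_eq_zero] using hγ⟩

theorem exists_unit_sq_mul_sub_mem_maximalIdeal [Finite (ResidueField R)]
    (h2 : (2 : R) ∈ maximalIdeal R) (u v : Rˣ) :
    ∃ t : Rˣ, (t : R) ^ 2 * u - v ∈ maximalIdeal R := by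
  -- Frobenius is bijective on a finite field of characteristic 2, so every residue is a square.
  have : CharP (ResidueField R) 2 :=
    (CharP.charP_iff_prime_eq_zero Nat.prime_two).2 <| by
      rw [Nat.cast_ofNat, ← map_ofNat (residue R) 2]
      exact (residue_eq_zero_iff 2).2 h2
  obtain ⟨s, hs⟩ := isSquare_of_charTwo' (residue R v * (residue R u)⁻¹)
  obtain ⟨t, rfl⟩ := residue_surjective s
  have hu : residue R u ≠ 0 := (residue_ne_zero_iff_isUnit _).2 u.isUnit
  have hv : residue R v ≠ 0 := (residue_ne_zero_iff_isUnit _).2 v.isUnit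
  have ht : IsUnit t := (residue_ne_zero_iff_isUnit t).1 fun h => by simp [h, hu, hv] at hs
  refine ⟨ht.unit, (residue_eq_zero_iff _).1 ?_⟩
  rw [map_sub, map_mul, map_pow, IsUnit.unit_spec, sq, ← hs, inv_mul_cancel_right₀ hu, sub_self]

theorem exists_sub_sq_add_sq_mul_eq [Finite (ResidueField R)] [HenselianRing R (maximalIdeal R)]
    (h2 : (2 : R) ∈ maximalIdeal R) (u v : Rˣ) :
    ∃ (γ : R) (t : Rˣ), γ - γ ^ 2 + t ^ 2 * u = v := by
  obtain ⟨t, ht⟩ := exists_unit_sq_mul_sub_mem_maximalIdeal h2 u v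
  obtain ⟨γ, hγ⟩ := exists_sq_sub_self_eq_of_mem_maximalIdeal ht
  exact ⟨γ, t, by linear_combination -hγ⟩

end IsLocalRing

end

theorem hyp_perp_represents_scaled_hyperbolic_and_anisotropic_general
    (R : Type*) [CommRing R] [IsDomain R] [IsDiscreteValuationRing R]
    [IsAdicComplete (IsLocalRing.maximalIdeal R) R]
    [Finite (IsLocalRing.ResidueField R)]
    (h2 : Prime (2 : R))
    (ρ : R) (hρ : IsUnit ρ)
    {m : ℕ} (J : Matrix (Fin m) (Fin m) R)
    (a : ℕ) (ε : Rˣ)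
    (hrep : PrimRep (!![2 ^ (a + 1) * (ε : R)] : Matrix (Fin 1) (Fin 1) R) J) :
    PrimRep ((2 ^ a : R) • (!![0, 1; 1, 0] : Matrix (Fin 2) (Fin 2) R))
        (Matrix.fromBlocks (!![0, 1; 1, 0] : Matrix (Fin 2) (Fin 2) R) 0 0 J) ∧
      PrimRep ((2 ^ a : R) • (!![2, 1; 1, 2 * ρ] : Matrix (Fin 2) (Fin 2) R))
        (Matrix.fromBlocks (!![0, 1; 1, 0] : Matrix (Fin 2) (Fin 2) R) 0 0 J) := by
  obtain ⟨γ, t, hγt⟩ :=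
    exists_sub_sq_add_sq_mul_eq ((mem_maximalIdeal _).2 h2.not_isUnit) ε hρ.unit
  have hJ : PrimRep (fromBlocks !![0, 1; 1, 0] 0 0 !![2 * 2 ^ a * (ε : R)])
      (fromBlocks !![0, 1; 1, 0] 0 0 J) :=
    (PrimRep.refl _).fromBlocks (by rwa [← pow_succ'])
  exact ⟨(primRep_smul_hyperbolic_fromBlocks_hyperbolic _ ε).trans hJ,
    (primRep_smul_anisotropic_fromBlocks_hyperbolic t (hρ.unit_spec ▸ hγt)).trans hJ⟩

/-- Let `R` be an unramified dyadic local ring (`2` prime).  If a lattice `J` primitively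
represents `2^(a+1)ε` for some `a ≥ 0` and unit `ε`, then `ℍ ⊥ J` primitively represents
both `2^a ℍ` and `2^a 𝔸`, where `𝔸 = [[2,1],[1,2ρ]]` with `Δ = 1 - 4ρ` a nonsquare unit. -/
theorem hyp_perp_represents_scaled_hyperbolic_and_anisotropic
    (R : Type*) [CommRing R] [IsDomain R] [IsDiscreteValuationRing R]
    [IsAdicComplete (IsLocalRing.maximalIdeal R) R]
    [Finite (IsLocalRing.ResidueField R)]
    (h2 : Prime (2 : R))
    (ρ : R) (hρ : IsUnit ρ) (hΔ : ¬ IsSquare ((1 : R) - 4 * ρ))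
    {m : ℕ} (J : Matrix (Fin m) (Fin m) R) (hJ : J.IsSymm) (hJd : J.det ≠ 0)
    (a : ℕ) (ε : Rˣ)
    (hrep : PrimRep (!![2 ^ (a + 1) * (ε : R)] : Matrix (Fin 1) (Fin 1) R) J) :
    PrimRep ((2 ^ a : R) • (!![0, 1; 1, 0] : Matrix (Fin 2) (Fin 2) R))
        (Matrix.fromBlocks (!![0, 1; 1, 0] : Matrix (Fin 2) (Fin 2) R) 0 0 J) ∧
      PrimRep ((2 ^ a : R) • (!![2, 1; 1, 2 * ρ] : Matrix (Fin 2) (Fin 2) R))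
        (Matrix.fromBlocks (!![0, 1; 1, 0] : Matrix (Fin 2) (Fin 2) R) 0 0 J) :=
  hyp_perp_represents_scaled_hyperbolic_and_anisotropic_general R h2 ρ hρ J a ε hrep
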